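/- Let X₁, X₂, X₃ be measurable spaces equipped with probability measures μ₁, μ₂, μ₃, and let c : X₁ × X₂ × X₃ → ℝ be measurable. Let μ be a probability measure on X₁ × X₂ × X₃ whose pushforwards under the three coordinate projections are μ₁, μ₂, μ₃ and such that c is μ-integrable. Let f₁, f₂, f₃ be functions with fᵢ integrable with respect to μᵢ, satisfying f₁(x₁)+f₂(x₂)+f₃(x₃) ≤ c(x₁,x₂,x₃) for all (x₁,x₂,x₃). Suppose there is a measurable set M ⊆ X₁ × X₂ × X₃ with μ(M)=1 such that f₁(x₁)+f₂(x₂)+f₃(x₃) = c(x₁,x₂,x₃) for all (x₁,x₂,x₃) ∈ M. Then: (i) for every probability measure ν on X₁ × X₂ × X₃ with the same three coordinate marginals μ₁, μ₂, μ₃ for which c is ν-integrable, ∫ c dμ ≤ ∫ c dν; and (ii) for every triple of functions g₁, g₂, g₃ with gᵢ integrable with respect to μᵢ and g₁(x₁)+g₂(x₂)+g₃(x₃) ≤ c(x₁,x₂,x₃) for all points, one has ∫ g₁ dμ₁ + ∫ g₂ dμ₂ + ∫ g₃ dμ₃ ≤ ∫ f₁ dμ₁ + ∫ f₂ dμ₂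 + ∫ f₃ dμ₃. -/

import Mathlib

/-!
Integrating a separable function `f₁ ⊕ f₂ ⊕ f₃` against any plan with marginals `μ₁, μ₂, μ₃`
gives `∫ f₁ dμ₁ + ∫ f₂ dμ₂ + ∫ f₃ dμ₃`. Hence every dual feasible triple has value at most the
cost of every plan (weak duality), and complementary slackness makes the value of `(f₁, f₂, f₃)`
equal to the cost of `μ`, so both are optimal.
-/

open MeasureTheory

theorem MeasureTheory.MeasurePreserving.integral_comp_of_aestronglyMeasurable
    {α β : Type*} [MeasurableSpace α] [MeasurableSpace β] {μ : Measure α} {ν : Measure β}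
    {G : Type*} [NormedAddCommGroup G] [NormedSpace ℝ G]
    {f : α → β} (hf : MeasurePreserving f μ ν) {g : β → G} (hg : AEStronglyMeasurable g ν) :
    ∫ x, g (f x) ∂μ = ∫ y, g y ∂ν := by
  rw [← hf.map_eq] at hg ⊢
  exact (integral_map hf.measurable.aemeasurable hg).symm

section ThreeMarginals

variable {X₁ X₂ X₃ : Type*} [MeasurableSpace X₁] [MeasurableSpace X₂] [MeasurableSpace X₃]
  {μ₁ : Measure X₁} {μ₂ : Measure X₂} {μ₃ : Measure X₃} {π : Measure (X₁ × X₂ × X₃)}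
  {f₁ : X₁ → ℝ} {f₂ : X₂ → ℝ} {f₃ : X₃ → ℝ}

theorem integrable_add_of_marginals
    (h1 : π.map (fun p => p.1) = μ₁) (h2 : π.map (fun p => p.2.1) = μ₂)
    (h3 : π.map (fun p => p.2.2) = μ₃)
    (hf₁ : Integrable f₁ μ₁) (hf₂ : Integrable f₂ μ₂) (hf₃ : Integrable f₃ μ₃) :
    Integrable (fun p : X₁ × X₂ × X₃ => f₁ p.1 + f₂ p.2.1 + f₃ p.2.2) π :=
  ((MeasurePreserving.integrable_comp_of_integrable ⟨measurable_fst, h1⟩ hf₁).add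
    (MeasurePreserving.integrable_comp_of_integrable ⟨measurable_snd.fst, h2⟩ hf₂)).add
    (MeasurePreserving.integrable_comp_of_integrable ⟨measurable_snd.snd, h3⟩ hf₃)

theorem integral_add_of_marginals
    (h1 : π.map (fun p => p.1) = μ₁) (h2 : π.map (fun p => p.2.1) = μ₂)
    (h3 : π.map (fun p => p.2.2) = μ₃)
    (hf₁ : Integrable f₁ μ₁) (hf₂ : Integrable f₂ μ₂) (hf₃ : Integrable f₃ μ₃) :
    ∫ p : X₁ × X₂ × X₃, (f₁ p.1 + f₂ p.2.1 + f₃ p.2.2) ∂π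
      = (∫ x, f₁ x ∂μ₁) + (∫ x, f₂ x ∂μ₂) + (∫ x, f₃ x ∂μ₃) := by
  have hp₁ : MeasurePreserving (fun p : X₁ × X₂ × X₃ => p.1) π μ₁ := ⟨measurable_fst, h1⟩
  have hp₂ : MeasurePreserving (fun p : X₁ × X₂ × X₃ => p.2.1) π μ₂ := ⟨measurable_snd.fst, h2⟩
  have hp₃ : MeasurePreserving (fun p : X₁ × X₂ × X₃ => p.2.2) π μ₃ := ⟨measurable_snd.snd, h3⟩
  have i₁ : Integrable (fun p : X₁ × X₂ × X₃ => f₁ p.1) π :=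
    hp₁.integrable_comp_of_integrable hf₁
  have i₂ : Integrable (fun p : X₁ × X₂ × X₃ => f₂ p.2.1) π :=
    hp₂.integrable_comp_of_integrable hf₂
  have i₃ : Integrable (fun p : X₁ × X₂ × X₃ => f₃ p.2.2) π :=
    hp₃.integrable_comp_of_integrable hf₃
  rw [integral_add (f := fun p => f₁ p.1 + f₂ p.2.1) (i₁.add i₂) i₃, integral_add i₁ i₂,
    hp₁.integral_comp_of_aestronglyMeasurable hf₁.aestronglyMeasurable,
    hp₂.integral_comp_of_aestronglyMeasurable hf₂.aestronglyMeasurable,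
    hp₃.integral_comp_of_aestronglyMeasurable hf₃.aestronglyMeasurable]

theorem integral_marginals_le_integral_of_ae_le {c : X₁ × X₂ × X₃ → ℝ}
    (h1 : π.map (fun p => p.1) = μ₁) (h2 : π.map (fun p => p.2.1) = μ₂)
    (h3 : π.map (fun p => p.2.2) = μ₃)
    (hf₁ : Integrable f₁ μ₁) (hf₂ : Integrable f₂ μ₂) (hf₃ : Integrable f₃ μ₃)
    (hc : Integrable c π) (hle : ∀ᵐ p ∂π, f₁ p.1 + f₂ p.2.1 + f₃ p.2.2 ≤ c p) :
    (∫ x, f₁ x ∂μ₁) + (∫ x, f₂ x ∂μ₂) + (∫ x, f₃ x ∂μ₃) ≤ ∫ p, c p ∂π := by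
  rw [← integral_add_of_marginals h1 h2 h3 hf₁ hf₂ hf₃]
  exact integral_mono_ae (integrable_add_of_marginals h1 h2 h3 hf₁ hf₂ hf₃) hc hle

theorem integral_eq_integral_marginals_of_ae_eq {c : X₁ × X₂ × X₃ → ℝ}
    (h1 : π.map (fun p => p.1) = μ₁) (h2 : π.map (fun p => p.2.1) = μ₂)
    (h3 : π.map (fun p => p.2.2) = μ₃)
    (hf₁ : Integrable f₁ μ₁) (hf₂ : Integrable f₂ μ₂) (hf₃ : Integrable f₃ μ₃)
    (heq : ∀ᵐ p ∂π, f₁ p.1 + f₂ p.2.1 + f₃ p.2.2 = c p) :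
    ∫ p, c p ∂π = (∫ x, f₁ x ∂μ₁) + (∫ x, f₂ x ∂μ₂) + (∫ x, f₃ x ∂μ₃) := by
  rw [← integral_congr_ae heq, integral_add_of_marginals h1 h2 h3 hf₁ hf₂ hf₃]

end ThreeMarginals

theorem complementary_slackness
    {X₁ X₂ X₃ : Type*} [MeasurableSpace X₁] [MeasurableSpace X₂] [MeasurableSpace X₃]
    (μ₁ : Measure X₁) (μ₂ : Measure X₂) (μ₃ : Measure X₃)
    (c : X₁ × X₂ × X₃ → ℝ)
    (μ : Measure (X₁ × X₂ × X₃)) [IsProbabilityMeasure μ]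
    (hμ1 : μ.map (fun p => p.1) = μ₁)
    (hμ2 : μ.map (fun p => p.2.1) = μ₂)
    (hμ3 : μ.map (fun p => p.2.2) = μ₃)
    (hcμ : Integrable c μ)
    (f₁ : X₁ → ℝ) (f₂ : X₂ → ℝ) (f₃ : X₃ → ℝ)
    (hf₁ : Integrable f₁ μ₁) (hf₂ : Integrable f₂ μ₂) (hf₃ : Integrable f₃ μ₃)
    (hle : ∀ x₁ x₂ x₃, f₁ x₁ + f₂ x₂ + f₃ x₃ ≤ c (x₁, x₂, x₃))
    (M : Set (X₁ × X₂ × X₃)) (hM : MeasurableSet M) (hμM : μ M = 1)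
    (heq : ∀ p ∈ M, f₁ p.1 + f₂ p.2.1 + f₃ p.2.2 = c p) :
    (∀ ν : Measure (X₁ × X₂ × X₃), IsProbabilityMeasure ν →
      ν.map (fun p => p.1) = μ₁ → ν.map (fun p => p.2.1) = μ₂ →
      ν.map (fun p => p.2.2) = μ₃ → Integrable c ν →
      ∫ p, c p ∂μ ≤ ∫ p, c p ∂ν) ∧
    (∀ (g₁ : X₁ → ℝ) (g₂ : X₂ → ℝ) (g₃ : X₃ → ℝ),
      Integrable g₁ μ₁ → Integrable g₂ μ₂ → Integrable g₃ μ₃ →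
      (∀ x₁ x₂ x₃, g₁ x₁ + g₂ x₂ + g₃ x₃ ≤ c (x₁, x₂, x₃)) →
      (∫ x, g₁ x ∂μ₁) + (∫ x, g₂ x ∂μ₂) + (∫ x, g₃ x ∂μ₃) ≤
        (∫ x, f₁ x ∂μ₁) + (∫ x, f₂ x ∂μ₂) + (∫ x, f₃ x ∂μ₃)) := by
  have hslack : ∀ᵐ p ∂μ, f₁ p.1 + f₂ p.2.1 + f₃ p.2.2 = c p := by
    filter_upwards [(mem_ae_iff_prob_eq_one hM).2 hμM] using heq
  have hvalue := integral_eq_integral_marginals_of_ae_eq hμ1 hμ2 hμ3 hf₁ hf₂ hf₃ hslack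
  refine ⟨fun ν _ hν1 hν2 hν3 hcν => ?_, fun g₁ g₂ g₃ hg₁ hg₂ hg₃ hgle => ?_⟩
  · rw [hvalue]
    exact integral_marginals_le_integral_of_ae_le hν1 hν2 hν3 hf₁ hf₂ hf₃ hcν
      (.of_forall fun p => hle p.1 p.2.1 p.2.2)
  · rw [← hvalue]
    exact integral_marginals_le_integral_of_ae_le hμ1 hμ2 hμ3 hg₁ hg₂ hg₃ hcμ
      (.of_forall fun p => hgle p.1 p.2.1 p.2.2)
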